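/- Let (g,B) be a quadratic Lie algebra and C a skew-symmetric derivation of g (i.e. C is a derivation with B(C(X),Y) = −B(X,C(Y)) for all X,Y ∈ g). On the vector space ḡ = g ⊕ ℂe ⊕ ℂf define [X,Y]_ḡ = [X,Y]_g + B(C(X),Y)·f, [e,X]_ḡ = C(X), and [f, ḡ]_ḡ = 0 for all X,Y ∈ g. Then this bracket makes ḡ a Lie algebra (it is skew-symmetric and satisfies the Jacobi identity), and the bilinear form B̄ on ḡ defined by B̄(X,Y) = B(X,Y) for X,Y ∈ g, B̄(e,f) = B̄(f,e) = 1, and B̄(e,e) = B̄(f,f) = B̄(e,X) = B̄(f,X) = 0 for X ∈ g, is symmetric, non-degenerate, and invariant on ḡ, so (ḡ, B̄) is a quadratic Lie algebra (the double extension of g by C). -/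

import Mathlib

/-- The bracket of the double extension `ḡ = g ⊕ ℂe ⊕ ℂf` of a quadratic Lie algebra
`(g, B)` by a skew-symmetric derivation `C`: an element `(x, a, c)` represents
`x + a·e + c·f`, and
`[x + a·e + c·f, y + a'·e + c'·f] = [x,y]_g + a·C(y) - a'·C(x) + B(C(x), y)·f`. -/
def deBracket (h : Type) [LieRing h] [LieAlgebra ℂ h]
    (B : LinearMap.BilinForm ℂ h) (C : h →ₗ[ℂ] h) :
    (h × ℂ × ℂ) → (h × ℂ × ℂ) → (h × ℂ × ℂ) :=
  fun u v => (⁅u.1, v.1⁆ + u.2.1 • C v.1 - v.2.1 • C u.1, 0, B (C u.1) v.1)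

/-- The bilinear form `B̄` of the double extension: it extends `B`, satisfies
`B̄(e, f) = 1` and vanishes on all other pairs involving `e` and `f`. -/
def deForm (h : Type) [AddCommGroup h] [Module ℂ h]
    (B : LinearMap.BilinForm ℂ h) : (h × ℂ × ℂ) → (h × ℂ × ℂ) → ℂ :=
  fun u v => B u.1 v.1 + u.2.1 * v.2.2 + u.2.2 * v.2.1

/-! The bracket of `ḡ` is the semidirect product of `g` with `ℂe` (acting by `C`), centrally
extended by the 2-form `ω(x, y) = B(C x, y)` with values in `ℂf`. Skew-symmetry of `C` with
respect to the symmetric form `B` makes `ω` alternating, and, together with the invariance of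
`B` and the derivation property of `C`, makes `ω` a 2-cocycle; the remaining Jacobi terms cancel
because `C` is a derivation. Invariance of `B̄` is invariance of `B` plus skew-symmetry of `C`. -/

namespace DoubleExtension

variable {g : Type} [LieRing g] [LieAlgebra ℂ g] {B : LinearMap.BilinForm ℂ g} {C : g →ₗ[ℂ] g}

lemma apply_derivation_self_eq_zero (hsymm : ∀ x y : g, B x y = B y x)
    (hskew : ∀ x y : g, B (C x) y = -(B x (C y))) (x : g) : B (C x) x = 0 := by
  linear_combination (hskew x x - hsymm x (C x)) / 2

lemma cocycle_cyclic_sum_eq_zero (hsymm : ∀ x y : g, B x y = B y x)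
    (hinv : ∀ x y z : g, B ⁅x, y⁆ z = B x ⁅y, z⁆)
    (hder : ∀ x y : g, C ⁅x, y⁆ = ⁅C x, y⁆ + ⁅x, C y⁆)
    (hskew : ∀ x y : g, B (C x) y = -(B x (C y))) (x y z : g) :
    B (C x) ⁅y, z⁆ + B (C y) ⁅z, x⁆ + B (C z) ⁅x, y⁆ = 0 := by
  have hCx : B (C x) ⁅y, z⁆ = -B x ⁅C y, z⁆ - B x ⁅y, C z⁆ := by
    rw [hskew, hder, map_add]; ring
  have hCy : B (C y) ⁅z, x⁆ = B x ⁅C y, z⁆ := by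
    rw [← hinv, hsymm]
  have hCz : B (C z) ⁅x, y⁆ = B x ⁅y, C z⁆ := by
    rw [hsymm, hinv]
  rw [hCx, hCy, hCz]; ring

lemma deBracket_self (hsymm : ∀ x y : g, B x y = B y x)
    (hskew : ∀ x y : g, B (C x) y = -(B x (C y))) (u : g × ℂ × ℂ) :
    deBracket g B C u u = 0 := by
  simp [deBracket, apply_derivation_self_eq_zero hsymm hskew, Prod.ext_iff]

lemma deBracket_jacobi_fst (hder : ∀ x y : g, C ⁅x, y⁆ = ⁅C x, y⁆ + ⁅x, C y⁆)
    (u v w : g × ℂ × ℂ) :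
    (deBracket g B C u (deBracket g B C v w) + deBracket g B C v (deBracket g B C w u) +
      deBracket g B C w (deBracket g B C u v)).1 = 0 := by
  obtain ⟨x, a, -⟩ := u
  obtain ⟨y, b, -⟩ := v
  obtain ⟨z, d, -⟩ := w
  simp only [deBracket, Prod.fst_add, zero_smul, sub_zero, lie_add, lie_sub, lie_smul, map_add,
    map_sub, map_smul, hder, smul_add, smul_sub]
  linear_combination (norm := module) lie_jacobi x y z - a • lie_skew (C y) z
    - b • lie_skew (C z) x - d • lie_skew (C x) y

lemma deBracket_jacobi (hsymm : ∀ x y : g, B x y = B y x)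
    (hinv : ∀ x y z : g, B ⁅x, y⁆ z = B x ⁅y, z⁆)
    (hder : ∀ x y : g, C ⁅x, y⁆ = ⁅C x, y⁆ + ⁅x, C y⁆)
    (hskew : ∀ x y : g, B (C x) y = -(B x (C y))) (u v w : g × ℂ × ℂ) :
    deBracket g B C u (deBracket g B C v w) + deBracket g B C v (deBracket g B C w u) +
      deBracket g B C w (deBracket g B C u v) = 0 := by
  refine Prod.ext (deBracket_jacobi_fst hder u v w) (Prod.ext ?_ ?_)
  · simp [deBracket]
  · obtain ⟨x, a, -⟩ := u
    obtain ⟨y, b, -⟩ := v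
    obtain ⟨z, d, -⟩ := w
    simp only [deBracket, Prod.snd_add, Prod.snd_zero, zero_smul, sub_zero, map_add, map_sub,
      map_smul, smul_eq_mul]
    linear_combination cocycle_cyclic_sum_eq_zero hsymm hinv hder hskew x y z
      + a * hsymm (C z) (C y) + b * hsymm (C x) (C z) + d * hsymm (C y) (C x)

lemma deForm_comm (hsymm : ∀ x y : g, B x y = B y x) (u v : g × ℂ × ℂ) :
    deForm g B u v = deForm g B v u := by
  simp only [deForm, hsymm u.1]; ring

lemma deForm_separatingLeft (hB : B.SeparatingLeft) (u : g × ℂ × ℂ)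
    (hu : ∀ v : g × ℂ × ℂ, deForm g B u v = 0) : u = 0 := by
  obtain ⟨x, a, c⟩ := u
  have hc : c = 0 := by simpa [deForm] using hu (0, 1, 0)
  have ha : a = 0 := by simpa [deForm] using hu (0, 0, 1)
  have hx : x = 0 := hB x fun y => by simpa [deForm] using hu (y, 0, 0)
  simp [hx, ha, hc]

lemma deForm_deBracket (hinv : ∀ x y z : g, B ⁅x, y⁆ z = B x ⁅y, z⁆)
    (hskew : ∀ x y : g, B (C x) y = -(B x (C y))) (u v w : g × ℂ × ℂ) :
    deForm g B (deBracket g B C u v) w = deForm g B u (deBracket g B C v w) := by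
  obtain ⟨x, a, -⟩ := u
  obtain ⟨y, b, -⟩ := v
  obtain ⟨z, d, -⟩ := w
  simp only [deForm, deBracket, map_add, map_sub, map_smul, smul_eq_mul,
    LinearMap.add_apply, LinearMap.sub_apply, LinearMap.smul_apply]
  linear_combination hinv x y z - b * hskew x z + d * hskew x y

end DoubleExtension

open DoubleExtension in
theorem double_extension_quadratic_general (g : Type) [LieRing g] [LieAlgebra ℂ g]
    (B : LinearMap.BilinForm ℂ g)
    (hsymm : ∀ x y : g, B x y = B y x)
    (hnd : B.Nondegenerate)
    (hinv : ∀ x y z : g, B ⁅x, y⁆ z = B x ⁅y, z⁆)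
    (C : g →ₗ[ℂ] g)
    (hder : ∀ x y : g, C ⁅x, y⁆ = ⁅C x, y⁆ + ⁅x, C y⁆)
    (hskew : ∀ x y : g, B (C x) y = -(B x (C y))) :
    (∀ u : g × ℂ × ℂ, deBracket g B C u u = 0) ∧
    (∀ u v w : g × ℂ × ℂ,
      deBracket g B C u (deBracket g B C v w) +
      deBracket g B C v (deBracket g B C w u) +
      deBracket g B C w (deBracket g B C u v) = 0) ∧
    (∀ u v : g × ℂ × ℂ, deForm g B u v = deForm g B v u) ∧
    (∀ u : g × ℂ × ℂ, (∀ v : g × ℂ × ℂ, deForm g B u v = 0) → u = 0) ∧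
    (∀ u v w : g × ℂ × ℂ,
      deForm g B (deBracket g B C u v) w = deForm g B u (deBracket g B C v w)) :=
  ⟨deBracket_self hsymm hskew, deBracket_jacobi hsymm hinv hder hskew, deForm_comm hsymm,
    deForm_separatingLeft hnd.1, deForm_deBracket hinv hskew⟩

/-- **Double extension.** Let `(g, B)` be a quadratic Lie algebra and `C` a
skew-symmetric derivation of `g`.  Then the bracket of the double extension
`ḡ = g ⊕ ℂe ⊕ ℂf` is alternating and satisfies the Jacobi identity (so `ḡ` is a Lie
algebra), and the extended bilinear form `B̄` is symmetric, non-degenerate and invariant,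
so `(ḡ, B̄)` is a quadratic Lie algebra. -/
theorem double_extension_quadratic (g : Type) [LieRing g] [LieAlgebra ℂ g]
    [FiniteDimensional ℂ g]
    (B : LinearMap.BilinForm ℂ g)
    (hsymm : ∀ x y : g, B x y = B y x)
    (hnd : B.Nondegenerate)
    (hinv : ∀ x y z : g, B ⁅x, y⁆ z = B x ⁅y, z⁆)
    (C : g →ₗ[ℂ] g)
    (hder : ∀ x y : g, C ⁅x, y⁆ = ⁅C x, y⁆ + ⁅x, C y⁆)
    (hskew : ∀ x y : g, B (C x) y = -(B x (C y))) :
    (∀ u : g × ℂ × ℂ, deBracket g B C u u = 0) ∧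
    (∀ u v w : g × ℂ × ℂ,
      deBracket g B C u (deBracket g B C v w) +
      deBracket g B C v (deBracket g B C w u) +
      deBracket g B C w (deBracket g B C u v) = 0) ∧
    (∀ u v : g × ℂ × ℂ, deForm g B u v = deForm g B v u) ∧
    (∀ u : g × ℂ × ℂ, (∀ v : g × ℂ × ℂ, deForm g B u v = 0) → u = 0) ∧
    (∀ u v w : g × ℂ × ℂ,
      deForm g B (deBracket g B C u v) w = deForm g B u (deBracket g B C v w)) :=
  double_extension_quadratic_general g B hsymm hnd hinv C hder hskew
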